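/- arXiv:1512.04633 — 4 statements merged into one kernel-verified Lean document; each statement's English description precedes it below -/
import Mathlib

section
/- For an undirected graph G with teleport probability α ∈ (0,1), the personalized PageRank satisfies the symmetry π_s[t] · d_s = π_t[s] · d_t for all node pairs (s,t), where d_v denotes the degree of v. -/
/-- Undirected PPR symmetry: `π_s[t] · d_s = π_t[s] · d_t`. -/
theorem stmt0 {V : Type*} [Fintype V] [DecidableEq V]
    (G : SimpleGraph V) [DecidableRel G.Adj]
    (hdeg : ∀ v, 0 < G.degree v)
    (α : ℝ) (hα : α ∈ Set.Ioo (0 : ℝ) 1)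
    (W : Matrix V V ℝ)
    (hW : ∀ u v, W u v = if G.Adj u v then 1 / (G.degree u : ℝ) else 0)
    (π : V → V → ℝ)
    (hπ : ∀ s t, π s t = ∑' ℓ : ℕ, α * (1 - α) ^ ℓ * (W ^ ℓ) s t)
    (s t : V) :
    π s t * (G.degree s : ℝ) = π t s * (G.degree t : ℝ) := by
  have hbase : ∀ u v : V, W u v * (G.degree u : ℝ) = W v u * (G.degree v : ℝ) := by
    intro u v
    rw [hW, hW]
    by_cases h : G.Adj u v
    · rw [if_pos h, if_pos h.symm]
      rw [one_div_mul_cancel (Nat.cast_ne_zero.mpr (hdeg u).ne'),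
        one_div_mul_cancel (Nat.cast_ne_zero.mpr (hdeg v).ne')]
    · rw [if_neg h, if_neg (fun h' => h h'.symm)]
      simp
  have hsym : ∀ (ℓ : ℕ) (u v : V),
      (W ^ ℓ) u v * (G.degree u : ℝ) = (W ^ ℓ) v u * (G.degree v : ℝ) := by
    intro ℓ
    induction ℓ with
    | zero =>
      intro u v
      by_cases h : u = v
      · subst h; rfl
      · simp [Matrix.one_apply, h, Ne.symm h]
    | succ n ih =>
      intro u v
      have h1 : (W ^ (n + 1)) u v = ∑ k, (W ^ n) u k * W k v := by
        rw [pow_succ]; rfl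
      have h2 : (W ^ (n + 1)) v u = ∑ k, W v k * (W ^ n) k u := by
        rw [pow_succ']; rfl
      rw [h1, h2, Finset.sum_mul, Finset.sum_mul]
      apply Finset.sum_congr rfl
      intro k _
      have e1 : (W ^ n) u k * W k v * (G.degree u : ℝ)
          = W k v * ((W ^ n) u k * (G.degree u : ℝ)) := by ring
      rw [e1, ih u k]
      have e2 : W k v * ((W ^ n) k u * (G.degree k : ℝ))
          = (W ^ n) k u * (W k v * (G.degree k : ℝ)) := by ring
      rw [e2, hbase k v]
      ring
  rw [hπ, hπ, ← tsum_mul_right, ← tsum_mul_right]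
  apply tsum_congr
  intro ℓ
  have h := hsym ℓ s t
  calc α * (1 - α) ^ ℓ * (W ^ ℓ) s t * ↑(G.degree s)
      = α * (1 - α) ^ ℓ * ((W ^ ℓ) s t * ↑(G.degree s)) := by ring
    _ = α * (1 - α) ^ ℓ * ((W ^ ℓ) t s * ↑(G.degree t)) := by rw [h]
    _ = α * (1 - α) ^ ℓ * (W ^ ℓ) t s * ↑(G.degree t) := by ring
end

section
/- If T is the total number of forward-push operations performed by ForwardPush with maximum residual r_max, and d_k is the degree of the vertex pushed in the k-th operation, then Σ_{k=1}^T d_k ≤ 1/(α·r_max). -/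
/-- Forward-push work bound (Lemma 2 of Andersen et al.): if each push at step `k`
(at a vertex of degree `d_k`, performed only when the residual there exceeds
`r_max·d_k`) decreases the ℓ₁-norm of the residual by at least `α·r_max·d_k`,
the norm starts at 1 and stays nonnegative, then `∑_{k<T} d_k ≤ 1/(α·r_max)`. -/
theorem stmt10 (α r_max : ℝ) (hα : 0 < α) (hr : 0 < r_max)
    (T : ℕ) (d : ℕ → ℕ)
    (R : ℕ → ℝ) (hR0 : R 0 = 1) (hRpos : ∀ k, 0 ≤ R k)
    (hstep : ∀ k < T, R (k + 1) ≤ R k - α * r_max * (d k : ℝ)) :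
    ∑ k ∈ Finset.range T, (d k : ℝ) ≤ 1 / (α * r_max) := by
  have hpos : 0 < α * r_max := mul_pos hα hr
  have key : ∀ n ≤ T, R n ≤ R 0 - α * r_max * ∑ k ∈ Finset.range n, (d k : ℝ) := by
    intro n hn
    induction n with
    | zero => simp
    | succ m ih =>
      have hm : m < T := hn
      calc R (m + 1) ≤ R m - α * r_max * (d m : ℝ) := hstep m hm
        _ ≤ R 0 - α * r_max * ∑ k ∈ Finset.range m, (d k : ℝ) - α * r_max * (d m : ℝ) := by
            linarith [ih (le_of_lt hm)]
        _ = R 0 - α * r_max * ∑ k ∈ Finset.range (m + 1), (d k : ℝ) := by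
            rw [Finset.sum_range_succ]; ring
  have h := key T le_rfl
  have := hRpos T
  rw [hR0] at h
  rw [le_div_iff₀ hpos]
  linarith
end

section
/- On an undirected graph, the UndirectedBiPPR estimator π̂_s[t] = p_s[t] + (1/w) Σ_{i=1}^w r_s[V_i]·d_t/d_{V_i}, where V_i are i.i.d. samples from π_t, is an unbiased estimator of π_s[t]. -/
open MeasureTheory

/-- The UndirectedBiPPR estimator
`π̂_s[t] = p_s[t] + (1/w) ∑ᵢ r_s[Vᵢ]·d_t/d_{Vᵢ}`, where `V₁,…,V_w` are i.i.d.
samples from `π_t`, is an unbiased estimator of `π_s[t]`. -/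
theorem stmt12 {V : Type*} [Fintype V] {Ω : Type*} [MeasurableSpace Ω]
    (μ : Measure Ω) [IsProbabilityMeasure μ]
    (d : V → ℕ) (hd : ∀ v, 0 < d v)
    (π : V → V → ℝ) (hπ0 : ∀ u v, 0 ≤ π u v) (hπ1 : ∀ u, ∑ v, π u v = 1)
    (hrev : ∀ u v, π u v * (d u : ℝ) = π v u * (d v : ℝ))
    (s t : V) (p r : V → ℝ)
    (hinv : ∀ t', π s t' = p t' + ∑ v, r v * π v t')
    (w : ℕ) (hw : 0 < w) (Vs : Fin w → Ω → V)
    (hdist : ∀ i (f : V → ℝ), ∫ ω, f (Vs i ω) ∂μ = ∑ v, π t v * f v) :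
    ∫ ω, (p t + (1 / (w : ℝ)) * ∑ i, r (Vs i ω) * (d t : ℝ) / (d (Vs i ω) : ℝ)) ∂μ
      = π s t := by
  set F : V → ℝ := fun v => r v * (d t : ℝ) / (d v : ℝ) with hF
  -- integrability of each term
  have hint : ∀ i, Integrable (fun ω => F (Vs i ω)) μ := by
    intro i
    by_contra h
    have h0 : ∫ ω, F (Vs i ω) ∂μ = 0 := integral_undef h
    have h1 : ¬ Integrable (fun ω => F (Vs i ω) + 1) μ := by
      intro h1
      have h2 := h1.sub (integrable_const (1 : ℝ))
      exact h (h2.congr (Filter.Eventually.of_forall fun ω => by simp))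
    have h0' : ∫ ω, (fun v => F v + 1) (Vs i ω) ∂μ = 0 := integral_undef h1
    have e1 := hdist i F
    have e2 := hdist i (fun v => F v + 1)
    rw [h0] at e1
    rw [h0'] at e2
    simp only [mul_add, Finset.sum_add_distrib, mul_one, hπ1 t, ← e1] at e2
    linarith
  have key : ∀ i, ∫ ω, F (Vs i ω) ∂μ = ∑ v, r v * π v t := by
    intro i
    rw [hdist i F]
    refine Finset.sum_congr rfl fun v _ => ?_
    have hdv : (d v : ℝ) ≠ 0 := Nat.cast_ne_zero.mpr (hd v).ne'
    have hvt : π v t = π t v * (d t : ℝ) / (d v : ℝ) := by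
      rw [eq_div_iff hdv]; linarith [hrev v t]
    simp only [hF]
    rw [hvt]; ring
  have hintsum : Integrable (fun ω => ∑ i, F (Vs i ω)) μ :=
    integrable_finset_sum _ fun i _ => hint i
  have : ∫ ω, (p t + (1 / (w : ℝ)) * ∑ i, F (Vs i ω)) ∂μ
      = p t + (1 / (w : ℝ)) * ∑ i, ∫ ω, F (Vs i ω) ∂μ := by
    rw [integral_add (integrable_const _) ((hintsum.const_mul _)),
      integral_const_mul, integral_finset_sum _ fun i _ => hint i]
    simp
  rw [show (fun ω => (p t + (1 / (w : ℝ)) * ∑ i, r (Vs i ω) * (d t : ℝ) / (d (Vs i ω) : ℝ)))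
      = fun ω => (p t + (1 / (w : ℝ)) * ∑ i, F (Vs i ω)) from rfl, this]
  simp only [key, Finset.sum_const, Finset.card_univ, Fintype.card_fin, nsmul_eq_mul]
  have hw' : (w : ℝ) ≠ 0 := Nat.cast_ne_zero.mpr hw.ne'
  rw [hinv t]
  field_simp
end

section
/- The REVERSE-PUSH-MSTP operation at (v,i) preserves the invariant π_s^ℓ[t] = ⟨s, p_t^ℓ⟩ + Σ_{k=0}^ℓ ⟨s W^k, r_t^{ℓ-k}⟩ for all source distributions s and all lengths ℓ. -/
open Finset Matrix

private lemma step14 {V : Type*} [Fintype V] [DecidableEq V]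
    (W : Matrix V V ℝ) (s : V → ℝ) (k : ℕ) (v : V) :
    ∑ u, Matrix.vecMul s (W ^ k) u * W u v = Matrix.vecMul s (W ^ (k + 1)) v := by
  rw [pow_succ, ← Matrix.vecMul_vecMul]
  simp [Matrix.vecMul, dotProduct]

/-- The REVERSE-PUSH-MSTP operation at `(v,i)` — which adds `r_t^i[v]` to `p_t^i[v]`,
adds `r_t^i[v]·(e_v Wᵀ)` to `r_t^{i+1}`, and zeroes `r_t^i[v]` — preserves the
invariant `π_s^ℓ[t] = ⟨s, p_t^ℓ⟩ + ∑_{k=0}^ℓ ⟨s W^k, r_t^{ℓ-k}⟩` for all source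
distributions `s` and all lengths `ℓ`. -/
theorem stmt14 {V : Type*} [Fintype V] [DecidableEq V]
    (W : Matrix V V ℝ) (hW0 : ∀ u v', 0 ≤ W u v') (hW1 : ∀ u, ∑ v', W u v' = 1)
    (t : V) (p r : ℕ → V → ℝ)
    (hinv : ∀ s : V → ℝ, (∀ u, 0 ≤ s u) → (∑ u, s u = 1) → ∀ ℓ : ℕ,
      Matrix.vecMul s (W ^ ℓ) t
        = (∑ u, s u * p ℓ u)
          + ∑ k ∈ Finset.range (ℓ + 1), ∑ u, Matrix.vecMul s (W ^ k) u * r (ℓ - k) u)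
    (v : V) (i : ℕ)
    (p' r' : ℕ → V → ℝ)
    (hp' : ∀ k u, p' k u = if k = i ∧ u = v then p i v + r i v else p k u)
    (hr' : ∀ k u, r' k u = if k = i ∧ u = v then 0
      else if k = i + 1 then r (i + 1) u + r i v * W u v else r k u) :
    ∀ s : V → ℝ, (∀ u, 0 ≤ s u) → (∑ u, s u = 1) → ∀ ℓ : ℕ,
      Matrix.vecMul s (W ^ ℓ) t
        = (∑ u, s u * p' ℓ u)
          + ∑ k ∈ Finset.range (ℓ + 1), ∑ u, Matrix.vecMul s (W ^ k) u * r' (ℓ - k) u := by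
  intro s hs0 hs1 ℓ
  rw [hinv s hs0 hs1 ℓ]
  rcases lt_trichotomy ℓ i with h | h | h
  · -- ℓ < i : nothing changes
    congr 1
    · refine Finset.sum_congr rfl fun u _ => ?_
      rw [hp', if_neg]
      rintro ⟨h1, -⟩; omega
    · refine Finset.sum_congr rfl fun k hk => Finset.sum_congr rfl fun u _ => ?_
      simp only [Finset.mem_range] at hk
      rw [hr', if_neg (by rintro ⟨h1, -⟩; omega), if_neg (by omega)]
  · -- ℓ = i
    subst h
    have hpnew : (∑ u, s u * p' ℓ u)
        = (∑ u, s u * p ℓ u) + s v * r ℓ v := by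
      have : ∀ u, p' ℓ u = p ℓ u + (if u = v then r ℓ v else 0) := by
        intro u
        rw [hp']
        by_cases hu : u = v
        · subst hu; simp
        · simp [hu]
      simp only [this, mul_add, Finset.sum_add_distrib, mul_ite, mul_zero]
      simp
    have hrnew : (∑ k ∈ Finset.range (ℓ + 1), ∑ u, Matrix.vecMul s (W ^ k) u * r' (ℓ - k) u)
        = (∑ k ∈ Finset.range (ℓ + 1), ∑ u, Matrix.vecMul s (W ^ k) u * r (ℓ - k) u)
          - s v * r ℓ v := by
      rw [Finset.sum_range_succ' (fun k => ∑ u, Matrix.vecMul s (W ^ k) u * r' (ℓ - k) u),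
          Finset.sum_range_succ' (fun k => ∑ u, Matrix.vecMul s (W ^ k) u * r (ℓ - k) u)]
      have h0 : ∀ u, r' (ℓ - 0) u = r (ℓ - 0) u - (if u = v then r ℓ v else 0) := by
        intro u
        rw [hr']
        by_cases hu : u = v
        · subst hu; simp
        · simp [hu]
      have hrest : ∀ k, k ∈ Finset.range ℓ →
          (∑ u, Matrix.vecMul s (W ^ (k + 1)) u * r' (ℓ - (k + 1)) u)
            = ∑ u, Matrix.vecMul s (W ^ (k + 1)) u * r (ℓ - (k + 1)) u := by
        intro k hk
        simp only [Finset.mem_range] at hk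
        refine Finset.sum_congr rfl fun u _ => ?_
        rw [hr', if_neg (by rintro ⟨h1, -⟩; omega), if_neg (by omega)]
      rw [Finset.sum_congr rfl hrest]
      simp only [h0, mul_sub, Finset.sum_sub_distrib, mul_ite, mul_zero]
      simp only [Finset.sum_ite_eq', Finset.mem_univ, if_true, pow_zero, Matrix.vecMul_one]
      ring
    rw [hpnew, hrnew]; ring
  · -- ℓ > i
    have hpnew : (∑ u, s u * p' ℓ u) = ∑ u, s u * p ℓ u := by
      refine Finset.sum_congr rfl fun u _ => ?_
      rw [hp', if_neg]; rintro ⟨h1, -⟩; omega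
    have hd : ∀ k ∈ Finset.range (ℓ + 1),
        (∑ u, Matrix.vecMul s (W ^ k) u * r' (ℓ - k) u)
          = (∑ u, Matrix.vecMul s (W ^ k) u * r (ℓ - k) u)
            + ((if k = ℓ - i then -(Matrix.vecMul s (W ^ (ℓ - i)) v * r i v) else 0)
              + (if k = ℓ - i - 1 then r i v * Matrix.vecMul s (W ^ (ℓ - i)) v else 0)) := by
      intro k hk
      simp only [Finset.mem_range] at hk
      by_cases hk1 : k = ℓ - i
      · have hki : ℓ - k = i := by omega
        have hk2 : k ≠ ℓ - i - 1 := by omega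
        rw [if_pos hk1, if_neg hk2, hki]
        have : ∀ u, r' i u = r i u - (if u = v then r i v else 0) := by
          intro u
          rw [hr']
          by_cases hu : u = v
          · subst hu; simp
          · simp [hu]
        simp only [this, mul_sub, Finset.sum_sub_distrib, mul_ite, mul_zero]
        simp only [Finset.sum_ite_eq', Finset.mem_univ, if_true]
        rw [hk1]; ring
      · by_cases hk2 : k = ℓ - i - 1
        · have hki : ℓ - k = i + 1 := by omega
          rw [if_neg hk1, if_pos hk2, hki]
          have : ∀ u, r' (i + 1) u = r (i + 1) u + r i v * W u v := by
            intro u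
            rw [hr', if_neg (by rintro ⟨h1, -⟩; omega), if_pos rfl]
          simp only [this, mul_add, Finset.sum_add_distrib]
          have hsum : ∑ u, Matrix.vecMul s (W ^ k) u * (r i v * W u v)
              = r i v * Matrix.vecMul s (W ^ (ℓ - i)) v := by
            have := step14 W s k v
            have hpow : k + 1 = ℓ - i := by omega
            rw [hpow] at this
            rw [← this, Finset.mul_sum]
            exact Finset.sum_congr rfl fun u _ => by ring
          rw [hsum]; ring
        · rw [if_neg hk1, if_neg hk2]
          simp only [add_zero]
          refine Finset.sum_congr rfl fun u _ => ?_
          rw [hr', if_neg (by rintro ⟨h1, -⟩; omega), if_neg (by omega)]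
    rw [hpnew, Finset.sum_congr rfl hd]
    rw [Finset.sum_add_distrib, Finset.sum_add_distrib]
    rw [Finset.sum_ite_eq' (Finset.range (ℓ + 1)) (ℓ - i)
      (fun _ => -(Matrix.vecMul s (W ^ (ℓ - i)) v * r i v)),
      Finset.sum_ite_eq' (Finset.range (ℓ + 1)) (ℓ - i - 1)
      (fun _ => r i v * Matrix.vecMul s (W ^ (ℓ - i)) v),
      if_pos (Finset.mem_range.mpr (by omega : ℓ - i < ℓ + 1)),
      if_pos (Finset.mem_range.mpr (by omega : ℓ - i - 1 < ℓ + 1))]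
    ring
end
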